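/- Let m be a positive integer, let F be a finite field with 2^{2m} elements, let n = 2^{2m} − 1, and let ω ∈ F be a primitive n-th root of unity, with rows e_0,…,e_{n−1} of the associated n×n Fourier matrix. Let C be the code spanned by the consecutive rows e_0, e_1, …, e_{2^m(2^m−1)}. Then C contains its Hermitian dual (defined with <u,v>_H = Σ_i u_i v_i^{2^m}), C has dimension 2^{2m} − 2^m + 1, and every nonzero codeword of C has Hamming weight at least 2^m − 1; that is, C is a Hermitian dual-containing [2^{2m}−1, 2^{2m}−2^m+1, 2^m−1] MDS code. -/

import Mathlib

/-!
Write `q = 2^m`, so `n = q² - 1`. The code spanned by the rows `e_s`, `s ≤ q(q-1)`, is the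
Reed–Solomon code of polynomials of degree `≤ q(q-1)` evaluated at the `n` distinct points `ω^j`:
a nonzero such polynomial has at most `q(q-1)` roots, which gives both the dimension and the
minimum distance `n - q(q-1) = q - 1`.

For dual containment, Fourier inversion writes `n • u = ∑_s û(s) e_s` with
`û(s) = ∑_j u_j ω^{-sj}`, and `n = -1 ≠ 0` in `F`. For `q(q-1) < s < n` we have
`0 < n - s ≤ q - 2`, and since `ω^{q²} = ω`, `ω^{-s} = (ω^{(n-s)q})^q`; thus `û(s)` is the
Hermitian product of `u` with the row `e_{(n-s)q}` of the code, which vanishes when `u` lies in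
the Hermitian dual. So every term of the sum lies in the code.
-/

open Polynomial Finset

section ReedSolomon

variable {ι F : Type*} [Field F]

noncomputable def evalAt (x : ι → F) : F[X] →ₗ[F] ι → F := LinearMap.pi fun i => leval (x i)

@[simp] lemma evalAt_apply (x : ι → F) (p : F[X]) (i : ι) : evalAt x p i = p.eval (x i) := rfl

variable [Fintype ι] [DecidableEq F] {x : ι → F}

lemma card_le_hammingNorm_evalAt_add_natDegree (hx : Function.Injective x) {p : F[X]}
    (hp : p ≠ 0) : Fintype.card ι ≤ hammingNorm (evalAt x p) + p.natDegree := by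
  have hroots : #({i | p.eval (x i) = 0} : Finset ι) ≤ p.natDegree := by
    rw [← card_image_of_injective _ hx]
    refine card_le_degree_of_subset_roots fun y hy => ?_
    obtain ⟨i, hi, rfl⟩ := mem_image.mp hy
    exact (mem_roots hp).mpr (mem_filter.mp hi).2
  calc Fintype.card ι = hammingNorm (evalAt x p) + #({i | p.eval (x i) = 0} : Finset ι) := by
        rw [hammingNorm, ← card_univ,
          ← card_filter_add_card_filter_not (s := univ) (fun i => evalAt x p i ≠ 0)]
        simp
    _ ≤ _ := by omega

lemma lt_hammingNorm_add_of_mem_map_evalAt_degreeLT (hx : Function.Injective x) {K : ℕ}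
    {v : ι → F} (hv : v ∈ (degreeLT F K).map (evalAt x)) (hv0 : v ≠ 0) :
    Fintype.card ι < hammingNorm v + K := by
  obtain ⟨p, hpK, rfl⟩ := hv
  have hp : p ≠ 0 := by rintro rfl; exact hv0 (map_zero _)
  have hdeg : p.natDegree < K := (natDegree_lt_iff_degree_lt hp).mpr (mem_degreeLT.mp hpK)
  have hcard := card_le_hammingNorm_evalAt_add_natDegree hx hp
  omega

lemma finrank_map_evalAt_degreeLT (hx : Function.Injective x) {K : ℕ}
    (hK : K ≤ Fintype.card ι) : Module.finrank F ((degreeLT F K).map (evalAt x)) = K := by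
  have hinj : Function.Injective ((evalAt x).domRestrict (degreeLT F K)) := by
    rw [← LinearMap.ker_eq_bot, LinearMap.ker_eq_bot']
    rintro ⟨p, hpK⟩ hp0
    have hzero : evalAt x p = 0 := hp0
    by_contra hne
    have hp : p ≠ 0 := fun h => hne (Subtype.ext h)
    have hcard := card_le_hammingNorm_evalAt_add_natDegree hx hp
    rw [hzero, hammingNorm_zero] at hcard
    have hdeg := (natDegree_lt_iff_degree_lt hp).mpr (mem_degreeLT.mp hpK)
    omega
  rw [← LinearMap.range_domRestrict, LinearMap.finrank_range_of_inj hinj,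
    (degreeLTEquiv F K).finrank_eq, Module.finrank_fin_fun]

end ReedSolomon

section Fourier

variable {F : Type*} [Field F] {ω : F} {n : ℕ}

def fourierRow (ω : F) (n s : ℕ) : Fin n → F := fun j => ω ^ (s * j)

lemma fourierRow_eq_evalAt_X_pow (ω : F) (n s : ℕ) :
    fourierRow ω n s = evalAt (fun j : Fin n => ω ^ (j : ℕ)) (X ^ s) := by
  ext j
  simp [fourierRow, ← pow_mul, mul_comm]

def fourierCode (ω : F) (n K : ℕ) : Submodule F (Fin n → F) :=
  Submodule.span F (Set.range fun s : Fin K => fourierRow ω n s)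

lemma fourierCode_eq_map_evalAt_degreeLT (ω : F) (n K : ℕ) :
    fourierCode ω n K =
      (degreeLT F K).map (evalAt fun j : Fin n => ω ^ (j : ℕ)) := by
  classical
  rw [fourierCode, degreeLT_eq_span_X_pow, Submodule.map_span]
  congr 1
  ext v
  simp [fourierRow_eq_evalAt_X_pow, Fin.exists_iff]

lemma injective_pow_fin (hω : orderOf ω = n) : Function.Injective fun j : Fin n => ω ^ (j : ℕ) :=
  fun i j hij => Fin.ext <| pow_injOn_Iio_orderOf (by simp [hω]) (by simp [hω]) hij

lemma sum_pow_eq_zero_of_pow_eq_one {y : F} (hy : y ^ n = 1) (hy1 : y ≠ 1) :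
    ∑ s : Fin n, y ^ (s : ℕ) = 0 := by
  rw [Fin.sum_univ_eq_sum_range (y ^ ·), geom_sum_eq hy1, hy, sub_self, zero_div]

lemma sum_pow_div_pow (hω : orderOf ω = n) (j t : Fin n) :
    ∑ s : Fin n, (ω ^ (t : ℕ) / ω ^ (j : ℕ)) ^ (s : ℕ) = if j = t then (n : F) else 0 := by
  have hω0 : ω ≠ 0 := by
    rintro rfl
    rw [orderOf_zero] at hω
    exact t.pos.ne hω
  have hωn : ω ^ n = 1 := hω ▸ pow_orderOf_eq_one ω
  split_ifs with hjt
  · simp [hjt, hω0]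
  · apply sum_pow_eq_zero_of_pow_eq_one
    · rw [div_pow, ← pow_mul, ← pow_mul, mul_comm (t : ℕ), mul_comm (j : ℕ), pow_mul, pow_mul,
        hωn, one_pow, one_pow, div_one]
    · rw [Ne, div_eq_one_iff_eq (pow_ne_zero _ hω0)]
      exact fun h => hjt (injective_pow_fin hω h).symm

lemma sum_smul_fourierRow (hω : orderOf ω = n) (u : Fin n → F) :
    ∑ s : Fin n, (∑ j, u j * ω⁻¹ ^ ((s : ℕ) * j)) • fourierRow ω n s = (n : F) • u := by
  ext t
  have hterm : ∀ s j : Fin n, u j * ω⁻¹ ^ ((s : ℕ) * j) * ω ^ ((s : ℕ) * t) =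
      u j * (ω ^ (t : ℕ) / ω ^ (j : ℕ)) ^ (s : ℕ) := by
    intro s j
    rw [mul_assoc, div_pow, ← pow_mul, ← pow_mul, inv_pow, div_eq_mul_inv, mul_comm (t : ℕ),
      mul_comm (j : ℕ), mul_comm (_⁻¹)]
  simp only [Finset.sum_apply, Pi.smul_apply, smul_eq_mul, fourierRow, Finset.sum_mul, hterm]
  rw [Finset.sum_comm]
  simp [← Finset.mul_sum, sum_pow_div_pow hω, mul_comm]

lemma inv_pow_eq_pow_sub (hω : orderOf ω = n) {s : ℕ} (hs : s ≤ n) : ω⁻¹ ^ s = ω ^ (n - s) := by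
  rw [inv_pow, eq_comm]
  apply eq_inv_of_mul_eq_one_left
  rw [pow_sub_mul_pow ω hs, ← hω, pow_orderOf_eq_one]

theorem hermitianDual_subset_fourierCode {q : ℕ} (hqn : n + 1 = q * q) (hω : orderOf ω = n)
    (hn : (n : F) ≠ 0) :
    {u : Fin n → F | ∀ v ∈ fourierCode ω n (q * (q - 1) + 1), ∑ x, u x * v x ^ q = 0} ⊆
      fourierCode ω n (q * (q - 1) + 1) := by
  intro u hu
  have hωqq : ω ^ (q * q) = ω := by rw [← hqn, pow_succ, ← hω, pow_orderOf_eq_one, one_mul]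
  have hk : q * (q - 1) + q = q * q := by
    rw [Nat.mul_sub_one, Nat.sub_add_cancel (Nat.le_mul_self q)]
  have hrow : ∀ s : Fin n, (∑ j, u j * ω⁻¹ ^ ((s : ℕ) * j)) • fourierRow ω n s ∈
      fourierCode ω n (q * (q - 1) + 1) := by
    intro s
    by_cases hs : (s : ℕ) ≤ q * (q - 1)
    · exact Submodule.smul_mem _ _ (Submodule.subset_span ⟨⟨s, by omega⟩, rfl⟩)
    · have hi : (n - s) * q ≤ q * (q - 1) := by
        rw [mul_comm q]
        exact Nat.mul_le_mul_right q (by omega)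
      have hcoef : ∀ j : Fin n, ω⁻¹ ^ ((s : ℕ) * j) = fourierRow ω n ((n - s) * q) j ^ q := by
        intro j
        calc ω⁻¹ ^ ((s : ℕ) * j) = ω ^ ((n - s) * j) := by
              rw [pow_mul, inv_pow_eq_pow_sub hω s.is_lt.le, ← pow_mul]
          _ = (ω ^ (q * q)) ^ ((n - s) * j) := by rw [hωqq]
          _ = fourierRow ω n ((n - s) * q) j ^ q := by
              rw [fourierRow, ← pow_mul, ← pow_mul]
              ring_nf
      simp only [hcoef]
      rw [hu _ (Submodule.subset_span ⟨⟨(n - s) * q, by omega⟩, rfl⟩), zero_smul]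
      exact Submodule.zero_mem _
  have hsum := Submodule.sum_mem _ fun s (_ : s ∈ univ) => hrow s
  rw [sum_smul_fourierRow hω] at hsum
  exact (Submodule.smul_mem_iff _ hn).mp hsum

end Fourier

lemma natCast_ne_zero_of_add_one_eq_card {F : Type*} [Field F] [Fintype F] {n : ℕ}
    (h : n + 1 = Fintype.card F) : (n : F) ≠ 0 := by
  have hcard := FiniteField.cast_card_eq_zero F
  rw [← h, Nat.cast_succ, add_eq_zero_iff_eq_neg] at hcard
  rw [hcard]
  exact neg_ne_zero.mpr one_ne_zero

/-- Over `GF(2^{2m})` with `n = 2^{2m} - 1`, the code generated by the consecutive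
Fourier matrix rows `e_0, …, e_{2^m(2^m-1)}` is a Hermitian dual-containing
`[2^{2m}-1, 2^{2m}-2^m+1, 2^m-1]` MDS code. -/
theorem fourier_hermitian_dual_containing_mds_char_two
    {m : ℕ} (hm : 1 ≤ m)
    {F : Type*} [Field F] [Fintype F] [DecidableEq F]
    (hF : Fintype.card F = 2 ^ (2 * m))
    {n : ℕ} (hn : n = 2 ^ (2 * m) - 1) {ω : F} (hω : orderOf ω = n)
    (e : ℕ → Fin n → F)
    (he : ∀ (i : ℕ) (j : Fin n), e i j = ω ^ (i * j.val))
    (C : Submodule F (Fin n → F))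
    (hC : C = Submodule.span F
      (Set.range fun s : Fin (2 ^ m * (2 ^ m - 1) + 1) => e s.val)) :
    {u : Fin n → F | ∀ v ∈ C, (∑ x, u x * (v x) ^ (2 ^ m)) = 0} ⊆ (C : Set (Fin n → F)) ∧
      Module.finrank F C = 2 ^ (2 * m) - 2 ^ m + 1 ∧
      ∀ v ∈ C, v ≠ 0 → 2 ^ m - 1 ≤ hammingNorm v := by
  set q := 2 ^ m
  have hq : 2 ≤ q := le_self_pow₀ one_le_two (by omega)
  have hqq : 2 ^ (2 * m) = q * q := by rw [two_mul, pow_add]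
  have hqn : n + 1 = q * q := by rw [hn, hqq]; have := Nat.le_mul_self q; omega
  have hk : q * (q - 1) + q = q * q := by
    rw [Nat.mul_sub_one, Nat.sub_add_cancel (Nat.le_mul_self q)]
  have hCF : C = fourierCode ω n (q * (q - 1) + 1) := by
    rw [hC, show e = fourierRow ω n from funext fun i => funext (he i)]
    rfl
  subst hCF
  have hx := injective_pow_fin hω
  refine ⟨hermitianDual_subset_fourierCode hqn hω
    (natCast_ne_zero_of_add_one_eq_card (hqn.trans (hqq.symm.trans hF.symm))), ?_, ?_⟩
  · rw [fourierCode_eq_map_evalAt_degreeLT,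
      finrank_map_evalAt_degreeLT hx (by rw [Fintype.card_fin]; omega)]
    omega
  · intro v hv hv0
    rw [fourierCode_eq_map_evalAt_degreeLT] at hv
    have hweight := lt_hammingNorm_add_of_mem_map_evalAt_degreeLT hx hv hv0
    rw [Fintype.card_fin] at hweight
    omega
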